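/- Let m ≥ 1 and let T be an invertible m×m complex matrix with polar decomposition T = U·P, where U is unitary and P = (T*T)^{1/2} has spectral decomposition P = Σ_{i=1}^{k} s_i E_i with s_i > 0 and Hermitian idempotent matrices E_i satisfying E_iE_j = 0 for i ≠ j and Σ_i E_i = I. Let μ be a probability measure on [0,1] and P_μ(s,t) := ∫_{[0,1]} ((1−λ)s⁻¹ + λt⁻¹)⁻¹ dμ(λ). Then ‖ Σ_{i,j=1}^{k} P_μ(s_i, s_j) E_i U E_j ‖ ≤ ‖T‖, where ‖·‖ denotes the operator norm with respect to the Euclidean norm on ℂ^m (the spectral norm). -/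

import Mathlib

/-!
Each coefficient `P_μ(s_i, s_j)` is a `μ`-average of weighted harmonic means
`((1-λ) a_i + λ b_j)⁻¹` with `a_i = s_i⁻¹`, `b_j = s_j⁻¹`, so it suffices to treat a fixed `λ`.
Since `(a + b)⁻¹ = ∫₀^∞ e^{-au} e^{-bu} du`, the operator `Σ (a_i + b_j)⁻¹ E_i U E_j` equals
`∫₀^∞ e^{-uA} U e^{-uB} du` with `A = Σ a_i E_i`, `B = Σ b_j E_j`. From `T E_i = s_i U E_i` we get
`s_i ≤ ‖T‖` whenever `E_i ≠ 0`, hence `‖e^{-uA}‖ ≤ e^{-(1-λ)u/‖T‖}` and `‖e^{-uB}‖ ≤ e^{-λu/‖T‖}`,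
and the norm is at most `∫₀^∞ e^{-u/‖T‖} du = ‖T‖`.
-/

open MeasureTheory Matrix Set
open scoped ComplexOrder

lemma norm_le_one_of_mem_unitary {A : Type*} [NormedRing A] [StarRing A] [CStarRing A] {U : A}
    (hU : U ∈ unitary A) : ‖U‖ ≤ 1 := by
  nontriviality A
  exact (CStarRing.norm_of_mem_unitary hU).le

lemma OrthogonalIdempotents.norm_le_norm_sum_smul {𝕜 A ι : Type*} [NormedField 𝕜] [NormedRing A]
    [NormedAlgebra 𝕜 A] [Fintype ι] {p : ι → A} (hp : OrthogonalIdempotents p) (c : ι → 𝕜)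
    {i : ι} (hi : p i ≠ 0) : ‖c i‖ ≤ ‖∑ j, c j • p j‖ := by
  have hmul : (∑ j, c j • p j) * p i = c i • p i := by
    rw [Finset.sum_mul, Finset.sum_eq_single i
      (fun j _ hji => by rw [smul_mul_assoc, hp.ortho hji, smul_zero]) (by simp),
      smul_mul_assoc, (hp.idem i).eq]
  have hpos : 0 < ‖p i‖ := norm_pos_iff.2 hi
  refine le_of_mul_le_mul_right ?_ hpos
  calc ‖c i‖ * ‖p i‖ = ‖(∑ j, c j • p j) * p i‖ := by rw [hmul, norm_smul]
    _ ≤ ‖∑ j, c j • p j‖ * ‖p i‖ := norm_mul_le _ _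

lemma integral_exp_neg_mul_smul {E : Type*} [NormedAddCommGroup E] [NormedSpace ℝ E]
    [CompleteSpace E] {c : ℝ} (hc : 0 < c) (w : E) :
    ∫ u in Ioi (0 : ℝ), Real.exp (-c * u) • w = c⁻¹ • w := by
  rw [integral_smul_const, integral_exp_mul_Ioi (neg_neg_of_pos hc), mul_zero, Real.exp_zero,
    neg_div_neg_eq, one_div]

lemma sum_smul_mul_mul_sum_smul {R A ι : Type*} [CommSemiring R] [Semiring A] [Algebra R A]
    [Fintype ι] (x y : ι → R) (p : ι → A) (V : A) :
    (∑ i, x i • p i) * V * (∑ j, y j • p j) = ∑ i, ∑ j, (x i * y j) • (p i * V * p j) := by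
  rw [Finset.sum_mul, Finset.sum_mul]
  refine Finset.sum_congr rfl fun i _ => ?_
  rw [Finset.mul_sum]
  refine Finset.sum_congr rfl fun j _ => ?_
  rw [smul_mul_assoc, smul_mul_assoc, mul_smul_comm, smul_smul]

section CStarAlgebra

variable {A : Type*} [CStarAlgebra A] [PartialOrder A] [StarOrderedRing A] {ι : Type*} [Fintype ι]
  {p : ι → A}

lemma CompleteOrthogonalIdempotents.norm_sum_smul_le
    (hp : CompleteOrthogonalIdempotents p) (hsa : ∀ i, IsSelfAdjoint (p i)) {c : ι → ℝ} {C : ℝ}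
    (hc : ∀ i, 0 ≤ c i) (hcC : ∀ i, p i ≠ 0 → c i ≤ C) (hC : 0 ≤ C) :
    ‖∑ i, c i • p i‖ ≤ C := by
  have hp0 : ∀ i, 0 ≤ p i := fun i => IsStarProjection.nonneg ⟨hp.idem i, hsa i⟩
  rw [CStarAlgebra.norm_le_iff_le_algebraMap _ hC
    (Finset.sum_nonneg fun i _ => smul_nonneg (hc i) (hp0 i)),
    Algebra.algebraMap_eq_smul_one, ← hp.complete, Finset.smul_sum]
  refine Finset.sum_le_sum fun i _ => ?_
  by_cases hi : p i = 0
  · simp [hi]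
  · exact smul_le_smul_of_nonneg_right (hcC i hi) (hp0 i)

lemma CompleteOrthogonalIdempotents.norm_sum_exp_smul_le
    (hp : CompleteOrthogonalIdempotents p) (hsa : ∀ i, IsSelfAdjoint (p i)) {c : ι → ℝ} {γ u : ℝ}
    (hc : ∀ i, p i ≠ 0 → γ ≤ c i) (hu : 0 ≤ u) :
    ‖∑ i, Real.exp (-c i * u) • p i‖ ≤ Real.exp (-γ * u) :=
  hp.norm_sum_smul_le hsa (fun _ => (Real.exp_pos _).le)
    (fun i hi => Real.exp_le_exp.2 (mul_le_mul_of_nonneg_right (neg_le_neg (hc i hi)) hu))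
    (Real.exp_pos _).le

theorem CompleteOrthogonalIdempotents.norm_sum_sum_inv_add_smul_le
    (hp : CompleteOrthogonalIdempotents p) (hsa : ∀ i, IsSelfAdjoint (p i)) (V : A)
    {a b : ι → ℝ} {α β : ℝ} (ha : ∀ i, p i ≠ 0 → α ≤ a i) (hb : ∀ j, p j ≠ 0 → β ≤ b j)
    (hαβ : 0 < α + β) :
    ‖∑ i, ∑ j, (a i + b j)⁻¹ • (p i * V * p j)‖ ≤ ‖V‖ / (α + β) := by
  have hpos : ∀ i j, 0 < a i + b j ∨ p i * V * p j = 0 := by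
    intro i j
    by_cases hi : p i = 0
    · simp [hi]
    by_cases hj : p j = 0
    · simp [hj]
    exact .inl (by linarith [ha i hi, hb j hj])
  have hint : ∀ i j,
      IntegrableOn (fun u => Real.exp (-(a i + b j) * u) • (p i * V * p j)) (Ioi 0) := by
    intro i j
    rcases hpos i j with h | h
    · exact (exp_neg_integrableOn_Ioi 0 h).smul_const _
    · simp [h]
  have hterm : ∀ i j, ∫ u in Ioi (0 : ℝ), Real.exp (-(a i + b j) * u) • (p i * V * p j) =
      (a i + b j)⁻¹ • (p i * V * p j) := by
    intro i j
    rcases hpos i j with h | h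
    · exact integral_exp_neg_mul_smul h _
    · simp [h]
  have hrepr : ∑ i, ∑ j, (a i + b j)⁻¹ • (p i * V * p j) = ∫ u in Ioi (0 : ℝ),
      (∑ i, Real.exp (-a i * u) • p i) * V * (∑ j, Real.exp (-b j * u) • p j) := by
    simp_rw [sum_smul_mul_mul_sum_smul, ← Real.exp_add, ← add_mul, ← neg_add]
    rw [integral_finsetSum _ fun i _ => integrable_finsetSum _ fun j _ => hint i j]
    exact Finset.sum_congr rfl fun i _ => by
      rw [integral_finsetSum _ fun j _ => hint i j]
      exact Finset.sum_congr rfl fun j _ => (hterm i j).symm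
  have hbound : ∀ u ∈ Ioi (0 : ℝ), ‖(∑ i, Real.exp (-a i * u) • p i) * V *
      (∑ j, Real.exp (-b j * u) • p j)‖ ≤ Real.exp (-(α + β) * u) * ‖V‖ := by
    intro u hu
    calc _ ≤ ‖∑ i, Real.exp (-a i * u) • p i‖ * ‖V‖ * ‖∑ j, Real.exp (-b j * u) • p j‖ :=
          norm_mul₃_le
      _ ≤ Real.exp (-α * u) * ‖V‖ * Real.exp (-β * u) := by
          gcongr
          · exact hp.norm_sum_exp_smul_le hsa ha hu.le
          · exact hp.norm_sum_exp_smul_le hsa hb hu.le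
      _ = Real.exp (-(α + β) * u) * ‖V‖ := by
          rw [mul_right_comm, ← Real.exp_add]; ring_nf
  calc ‖∑ i, ∑ j, (a i + b j)⁻¹ • (p i * V * p j)‖
      ≤ ∫ u in Ioi (0 : ℝ), Real.exp (-(α + β) * u) * ‖V‖ := by
        rw [hrepr]
        exact norm_integral_le_of_norm_le ((exp_neg_integrableOn_Ioi 0 hαβ).mul_const _)
          ((ae_restrict_iff' measurableSet_Ioi).2 (Filter.Eventually.of_forall hbound))
    _ = ‖V‖ / (α + β) := by
        rw [integral_mul_const, integral_exp_mul_Ioi (neg_neg_of_pos hαβ), mul_zero,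
          Real.exp_zero, neg_div_neg_eq, one_div, inv_mul_eq_div]

theorem CompleteOrthogonalIdempotents.norm_sum_sum_harmonic_smul_le
    (hp : CompleteOrthogonalIdempotents p) (hsa : ∀ i, IsSelfAdjoint (p i)) (V : A)
    {s : ι → ℝ} {S t : ℝ} (hs : ∀ i, p i ≠ 0 → 0 < s i) (hsS : ∀ i, p i ≠ 0 → s i ≤ S)
    (hS : 0 ≤ S) (ht : t ∈ Icc (0 : ℝ) 1) :
    ‖∑ i, ∑ j, ((1 - t) * (s i)⁻¹ + t * (s j)⁻¹)⁻¹ • (p i * V * p j)‖ ≤ ‖V‖ * S := by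
  rcases hS.eq_or_lt with rfl | hS
  · have hp0 : ∀ i, p i = 0 := fun i => by_contra fun hi => (hs i hi).not_ge (hsS i hi)
    simp [hp0]
  have hweight : ∀ {w : ℝ}, 0 ≤ w → ∀ i, p i ≠ 0 → w * S⁻¹ ≤ w * (s i)⁻¹ :=
    fun hw i hi => mul_le_mul_of_nonneg_left (inv_anti₀ (hs i hi) (hsS i hi)) hw
  have hsum : (1 - t) * S⁻¹ + t * S⁻¹ = S⁻¹ := by ring
  have := hp.norm_sum_sum_inv_add_smul_le hsa V (hweight (sub_nonneg.2 ht.2)) (hweight ht.1)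
    (by rw [hsum]; exact inv_pos.2 hS)
  rwa [hsum, div_inv_eq_mul] at this

theorem CompleteOrthogonalIdempotents.norm_sum_sum_integral_harmonic_smul_le
    (hp : CompleteOrthogonalIdempotents p) (hsa : ∀ i, IsSelfAdjoint (p i)) (V : A)
    {s : ι → ℝ} {S : ℝ} (hs : ∀ i, 0 < s i) (hsS : ∀ i, p i ≠ 0 → s i ≤ S) (hS : 0 ≤ S)
    (μ : Measure ℝ) [IsProbabilityMeasure μ] :
    ‖∑ i, ∑ j, (∫ t in Icc (0 : ℝ) 1, ((1 - t) * (s i)⁻¹ + t * (s j)⁻¹)⁻¹ ∂μ) •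
      (p i * V * p j)‖ ≤ ‖V‖ * S := by
  have hint : ∀ i j, IntegrableOn (fun t => ((1 - t) * (s i)⁻¹ + t * (s j)⁻¹)⁻¹) (Icc 0 1) μ := by
    refine fun i j => ContinuousOn.integrableOn_compact isCompact_Icc ?_
    refine (Continuous.continuousOn (by fun_prop)).inv₀ fun t ht => ne_of_gt ?_
    exact convex_Ioi (0 : ℝ) (inv_pos.2 (hs i)) (inv_pos.2 (hs j)) (sub_nonneg.2 ht.2) ht.1
      (sub_add_cancel 1 t)
  have hrepr : ∑ i, ∑ j, (∫ t in Icc (0 : ℝ) 1, ((1 - t) * (s i)⁻¹ + t * (s j)⁻¹)⁻¹ ∂μ) •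
      (p i * V * p j) = ∫ t in Icc (0 : ℝ) 1,
        ∑ i, ∑ j, ((1 - t) * (s i)⁻¹ + t * (s j)⁻¹)⁻¹ • (p i * V * p j) ∂μ := by
    rw [integral_finsetSum _ fun i _ =>
      integrable_finsetSum _ fun j _ => (hint i j).smul_const _]
    refine Finset.sum_congr rfl fun i _ => ?_
    rw [integral_finsetSum _ fun j _ => (hint i j).smul_const _]
    exact Finset.sum_congr rfl fun j _ => (integral_smul_const _ _).symm
  rw [hrepr]
  calc _ ≤ ‖V‖ * S * μ.real (Icc 0 1) :=
        norm_setIntegral_le_of_norm_le_const (measure_lt_top μ _) fun t ht =>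
          hp.norm_sum_sum_harmonic_smul_le hsa V (fun i _ => hs i) hsS hS ht
    _ ≤ ‖V‖ * S := mul_le_of_le_one_right (by positivity) measureReal_le_one

end CStarAlgebra

theorem stmt_6_general (m : ℕ) (T : Matrix (Fin m) (Fin m) ℂ)
    (U P : Matrix (Fin m) (Fin m) ℂ)
    (hU : U ∈ Matrix.unitaryGroup (Fin m) ℂ)
    (hpolar : T = U * P)
    (k : ℕ) (s : Fin k → ℝ) (hs : ∀ i, 0 < s i)
    (E : Fin k → Matrix (Fin m) (Fin m) ℂ)
    (hEherm : ∀ i, (E i).IsHermitian) (hEidem : ∀ i, E i * E i = E i)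
    (hEorth : ∀ i j, i ≠ j → E i * E j = 0) (hEsum : ∑ i, E i = 1)
    (hPdec : P = ∑ i, (s i : ℂ) • E i)
    (μ : Measure ℝ) [IsProbabilityMeasure μ] :
    ‖Matrix.toEuclideanCLM (𝕜 := ℂ)
        (∑ i, ∑ j,
          ((∫ lam in Set.Icc (0 : ℝ) 1,
              ((1 - lam) * (s i)⁻¹ + lam * (s j)⁻¹)⁻¹ ∂μ : ℝ) : ℂ) • (E i * U * E j))‖ ≤
      ‖Matrix.toEuclideanCLM (𝕜 := ℂ) T‖ := by
  set Φ := Matrix.toEuclideanCLM (n := Fin m) (𝕜 := ℂ)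
  have hE : CompleteOrthogonalIdempotents E := ⟨⟨hEidem, fun i j => hEorth i j⟩, hEsum⟩
  have hp : CompleteOrthogonalIdempotents fun i => Φ (E i) := hE.map Φ.toRingEquiv.toRingHom
  have hsa : ∀ i, IsSelfAdjoint (Φ (E i)) := fun i => (hEherm i).isSelfAdjoint.map Φ
  have hΦU : Φ U ∈ unitary _ := Unitary.map_mem Φ hU
  have hΦT : Φ T = Φ U * ∑ j, (s j : ℂ) • Φ (E j) := by
    simp only [hpolar, hPdec, map_mul, map_sum, map_smul]
  have hsS : ∀ i, Φ (E i) ≠ 0 → s i ≤ ‖Φ T‖ := by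
    intro i hi
    have := hp.toOrthogonalIdempotents.norm_le_norm_sum_smul (fun j => (s j : ℂ)) hi
    rwa [Complex.norm_real, Real.norm_of_nonneg (hs i).le, ← CStarRing.norm_mem_unitary_mul _ hΦU,
      ← hΦT] at this
  have hmap : Φ (∑ i, ∑ j,
      ((∫ t in Icc (0 : ℝ) 1, ((1 - t) * (s i)⁻¹ + t * (s j)⁻¹)⁻¹ ∂μ : ℝ) : ℂ) • (E i * U * E j)) =
      ∑ i, ∑ j, (∫ t in Icc (0 : ℝ) 1, ((1 - t) * (s i)⁻¹ + t * (s j)⁻¹)⁻¹ ∂μ) •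
        (Φ (E i) * Φ U * Φ (E j)) := by
    simp only [map_sum, map_smul, map_mul]
    norm_cast
  calc _ ≤ ‖Φ U‖ * ‖Φ T‖ :=
        hmap ▸ hp.norm_sum_sum_integral_harmonic_smul_le hsa _ hs hsS (norm_nonneg _) μ
    _ ≤ ‖Φ T‖ := mul_le_of_le_one_left (norm_nonneg _) (norm_le_one_of_mem_unitary hΦU)

/-- With `T = U·P` the polar decomposition of an invertible matrix,
`P = Σᵢ sᵢ Eᵢ` a spectral decomposition and `μ` a probability measure on `[0,1]`, the
generalized Aluthge transformation `Σᵢⱼ P_μ(sᵢ,sⱼ) Eᵢ U Eⱼ` has spectral norm at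
most `‖T‖` (operator norm w.r.t. the Euclidean norm on `ℂ^m`). -/
theorem stmt_6 (m : ℕ) (hm : 1 ≤ m) (T : Matrix (Fin m) (Fin m) ℂ) (hT : IsUnit T.det)
    (U P : Matrix (Fin m) (Fin m) ℂ)
    (hU : U ∈ Matrix.unitaryGroup (Fin m) ℂ)
    (hP : P.PosSemidef) (hP2 : P * P = Tᴴ * T) (hpolar : T = U * P)
    (k : ℕ) (s : Fin k → ℝ) (hs : ∀ i, 0 < s i)
    (E : Fin k → Matrix (Fin m) (Fin m) ℂ)
    (hEherm : ∀ i, (E i).IsHermitian) (hEidem : ∀ i, E i * E i = E i)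
    (hEorth : ∀ i j, i ≠ j → E i * E j = 0) (hEsum : ∑ i, E i = 1)
    (hPdec : P = ∑ i, (s i : ℂ) • E i)
    (μ : Measure ℝ) [IsProbabilityMeasure μ] (hμ : μ (Set.Icc (0 : ℝ) 1) = 1) :
    ‖Matrix.toEuclideanCLM (𝕜 := ℂ)
        (∑ i, ∑ j,
          ((∫ lam in Set.Icc (0 : ℝ) 1,
              ((1 - lam) * (s i)⁻¹ + lam * (s j)⁻¹)⁻¹ ∂μ : ℝ) : ℂ) • (E i * U * E j))‖ ≤
      ‖Matrix.toEuclideanCLM (𝕜 := ℂ) T‖ :=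
  stmt_6_general m T U P hU hpolar k s hs E hEherm hEidem hEorth hEsum hPdec μ
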